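/- Let $(A,\mathfrak{m})$ be a countable Noetherian local ring, $J$ an ideal of $A$, and $M$ an $A$-module that is complete with respect to the $J$-adic topology. Suppose $V(J) \subseteq \operatorname{Supp}(M)$. Then $\operatorname{Supp}(M) = V(\operatorname{Ann}_A(M))$. -/

import Mathlib

/-!
Let `p ⊇ Ann M` be prime. If some `s ∉ p` kills some `J ^ n M`, then `s J ^ n ⊆ Ann M ⊆ p` forces
`J ⊆ p`, so `p ∈ V(J) ⊆ Supp M`. Otherwise, for each `s ∉ p` the kernel of `s` on `M` is
`J`-adically closed with empty interior, and `A` is countable, so the Baire argument in the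
complete module `M` produces `L` with `s • L ≠ 0` for all `s ∉ p`, i.e. `p ∈ Supp M`.
The Baire argument is carried out by hand: nested `J`-adic balls, each avoiding one kernel,
shrink to the required `L`.
-/

universe u

open Submodule

variable {A : Type*} [CommRing A] {J : Ideal A} {M : Type*} [AddCommGroup M] [Module A M]

theorem IsPrecomplete.exists_sub_mem_of_strictMono [IsPrecomplete J M] {m : ℕ → M} {n : ℕ → ℕ}
    (hn : StrictMono n) (hm : ∀ k, m (k + 1) - m k ∈ J ^ n k • (⊤ : Submodule A M)) :
    ∃ L : M, ∀ k, L - m k ∈ J ^ n k • (⊤ : Submodule A M) := by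
  have hcauchy : ∀ k j, k ≤ j → m k ≡ m j [SMOD (J ^ n k • ⊤ : Submodule A M)] := by
    intro k j hkj
    induction j, hkj using Nat.le_induction with
    | base => rfl
    | succ j hkj ih =>
      exact ih.trans ((SModEq.sub_mem.mpr (hm j)).symm.mono
        (pow_smul_top_le J M (hn.monotone hkj)))
  obtain ⟨L, hL⟩ := IsPrecomplete.prec ‹_› fun {k j} hkj =>
    (hcauchy k j hkj).mono (pow_smul_top_le J M (hn.le_apply (x := k)))
  exact ⟨L, fun k => SModEq.sub_mem.mp ((hcauchy k (n k) hn.le_apply).trans (hL (n k))).symm⟩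

theorem IsHausdorff.exists_pow_forall_smul_ne_zero [IsHausdorff J M] {s : A} {m : M}
    (h : s • m ≠ 0) : ∃ n, ∀ y, y - m ∈ J ^ n • (⊤ : Submodule A M) → s • y ≠ 0 := by
  obtain ⟨n, hn⟩ : ∃ n, s • m ∉ J ^ n • (⊤ : Submodule A M) := by
    by_contra! H
    exact h (IsHausdorff.haus ‹_› _ fun n => SModEq.sub_mem.mpr (by simpa using H n))
  refine ⟨n, fun y hy hsy => hn ?_⟩
  have : s • m = -(s • (y - m)) := by rw [smul_sub, hsy]; abel
  exact this ▸ neg_mem (smul_mem _ s hy)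

theorem exists_smul_add_ne_zero {s : A}
    (hs : ∀ n, ∃ x ∈ J ^ n • (⊤ : Submodule A M), s • x ≠ 0) (m : M) (n : ℕ) :
    ∃ x ∈ J ^ n • (⊤ : Submodule A M), s • (m + x) ≠ 0 := by
  by_cases hm : s • m = 0
  · obtain ⟨x, hx, hsx⟩ := hs n
    exact ⟨x, hx, by rwa [smul_add, hm, zero_add]⟩
  · exact ⟨0, zero_mem _, by rwa [add_zero]⟩

theorem IsAdicComplete.exists_forall_smul_ne_zero [IsAdicComplete J M] {s : ℕ → A}
    (hs : ∀ k n, ∃ x ∈ J ^ n • (⊤ : Submodule A M), s k • x ≠ 0) :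
    ∃ L : M, ∀ k, s k • L ≠ 0 := by
  -- From the ball `q.1 + J ^ q.2 M`, pass to a smaller ball on which `s k` vanishes nowhere.
  have shrink : ∀ k (q : M × ℕ), ∃ q' : M × ℕ, q'.1 - q.1 ∈ J ^ q.2 • (⊤ : Submodule A M) ∧
      q.2 < q'.2 ∧ ∀ y, y - q'.1 ∈ J ^ q'.2 • (⊤ : Submodule A M) → s k • y ≠ 0 := by
    rintro k ⟨m, n⟩
    obtain ⟨x, hx, hne⟩ := exists_smul_add_ne_zero (hs k) m n
    obtain ⟨N, hN⟩ := IsHausdorff.exists_pow_forall_smul_ne_zero (J := J) hne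
    exact ⟨(m + x, max N n + 1), by simpa using hx, by simp only; omega,
      fun y hy => hN y (pow_smul_top_le J M (by omega) hy)⟩
  choose next hsub hlt hball using shrink
  let q : ℕ → M × ℕ := fun k => Nat.rec (0, 0) next k
  obtain ⟨L, hL⟩ := IsPrecomplete.exists_sub_mem_of_strictMono (m := fun k => (q k).1)
    (strictMono_nat_of_lt_succ fun k => hlt k (q k)) fun k => hsub k (q k)
  exact ⟨L, fun k => hball k (q k) L (hL (k + 1))⟩

theorem IsAdicComplete.exists_forall_mem_smul_ne_zero [IsAdicComplete J M] {S : Set A}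
    (hS : S.Countable) (hs : ∀ s ∈ S, ∀ n, ∃ x ∈ J ^ n • (⊤ : Submodule A M), s • x ≠ 0) :
    ∃ L : M, ∀ s ∈ S, s • L ≠ 0 := by
  rcases S.eq_empty_or_nonempty with rfl | hne
  · exact ⟨0, by simp⟩
  obtain ⟨f, rfl⟩ := hS.exists_eq_range hne
  obtain ⟨L, hL⟩ := exists_forall_smul_ne_zero (J := J) fun k => hs (f k) ⟨k, rfl⟩
  exact ⟨L, by simpa using hL⟩

theorem Ideal.IsPrime.le_of_annihilator_le_of_smul_eq_zero {p : Ideal A} (hp : p.IsPrime)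
    (hann : Module.annihilator A M ≤ p) {s : A} (hs : s ∉ p) {n : ℕ}
    (h : ∀ x ∈ J ^ n • (⊤ : Submodule A M), s • x = 0) : J ≤ p := by
  intro a ha
  have hsa : s * a ^ n ∈ p := hann <| Module.mem_annihilator.mpr fun x => by
    rw [mul_smul]
    exact h _ (smul_mem_smul (Ideal.pow_mem_pow ha n) mem_top)
  exact hp.mem_of_pow_mem n ((hp.mem_or_mem hsa).resolve_left hs)

theorem support_eq_zeroLocus_annihilator_of_adicComplete_general
    (A : Type u) [CommRing A] [Countable A]
    (J : Ideal A) (M : Type u) [AddCommGroup M] [Module A M]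
    [IsAdicComplete J M]
    (hJ : PrimeSpectrum.zeroLocus (J : Set A) ⊆ Module.support A M) :
    Module.support A M = PrimeSpectrum.zeroLocus (Module.annihilator A M : Set A) := by
  refine subset_antisymm (fun p hp => Module.annihilator_le_of_mem_support hp) fun p hp => ?_
  by_cases h : ∃ s ∉ p.asIdeal, ∃ n, ∀ x ∈ J ^ n • (⊤ : Submodule A M), s • x = 0
  · obtain ⟨s, hs, n, hsn⟩ := h
    exact hJ (p.isPrime.le_of_annihilator_le_of_smul_eq_zero hp hs hsn)
  · push Not at h
    obtain ⟨L, hL⟩ := IsAdicComplete.exists_forall_mem_smul_ne_zero (J := J)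
      (Set.to_countable (p.asIdeal : Set A)ᶜ) h
    exact Module.mem_support_iff'.mpr ⟨L, hL⟩

/-- For a countable Noetherian local ring `A`, an ideal `J`, and a `J`-adically complete
module `M` with `V(J) ⊆ Supp M`, the support of `M` equals the zero locus of its
annihilator. -/
theorem support_eq_zeroLocus_annihilator_of_adicComplete
    (A : Type u) [CommRing A] [IsLocalRing A] [IsNoetherianRing A] [Countable A]
    (J : Ideal A) (M : Type u) [AddCommGroup M] [Module A M]
    [IsAdicComplete J M]
    (hJ : PrimeSpectrum.zeroLocus (J : Set A) ⊆ Module.support A M) :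
    Module.support A M = PrimeSpectrum.zeroLocus (Module.annihilator A M : Set A) :=
  support_eq_zeroLocus_annihilator_of_adicComplete_general A J M hJ
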